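/- Assume n = 1, so ℂ⟨x⟩ = ℂ⟨x_1⟩ is generated by the single tuple of generators x_{11}, …, x_{1r(1)}, and let τ be a Hermitian unital linear functional on ℂ⟨x⟩. If τ has finite-dimensional approximants, then π_{orb,R}(h : τ) = −τ(h) for every self-adjoint h ∈ ℂ⟨x⟩, and consequently η_{orb,R}(τ) = 0. If τ does not have finite-dimensional approximants, then η_{orb,R}(τ) = −∞. -/

import Mathlib

/-!
Orbital free pressure and its Legendre transform (Hiai–Ueda).

Common infrastructure: the free unital complex *-algebra on self-adjoint generators,
matrix microstate sets, the orbital free pressure, the orbital η-entropy, the orbital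
free entropy; Lebesgue measure on self-adjoint matrices, the free pressure, free
entropy and η-entropy; Gibbs (micro-)ensembles.

The Haar probability measures `γ_{U(N)}` on the unitary groups are formalized as a
family of left-invariant Borel probability measures (which uniquely determines them).
-/

open MeasureTheory Filter Topology
open scoped BigOperators ENNReal TensorProduct ComplexOrder

noncomputable section

namespace OrbFP

/-- The algebra of `N × N` complex matrices. -/
abbrev Mat (N : ℕ) := Matrix (Fin N) (Fin N) ℂ

/-- The normalized trace `tr_N`. -/
def trN (N : ℕ) (A : Mat N) : ℂ := A.trace / (N : ℂ)

/-- The (ℓ²-)operator norm of a matrix. -/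
def opNorm {N : ℕ} (A : Mat N) : ℝ := ‖Matrix.toEuclideanCLM (𝕜 := ℂ) A‖

/-- The unitary group `U(N)`. -/
abbrev UN (N : ℕ) := Matrix.unitaryGroup (Fin N) ℂ

instance (N : ℕ) : MeasurableSpace (UN N) := borel _
instance (N : ℕ) : BorelSpace (UN N) := ⟨rfl⟩
instance (N : ℕ) : MeasurableSpace (Mat N) := borel _
instance (N : ℕ) : BorelSpace (Mat N) := ⟨rfl⟩

/-- The free unital complex *-algebra on self-adjoint generators indexed by `X`. -/
abbrev FAlg (X : Type) := FreeAlgebra ℂ X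

/-- Coefficient-wise complex conjugation on the free algebra. -/
def conjCoeff {X : Type} (p : FAlg X) : FAlg X :=
  (FreeAlgebra.equivMonoidAlgebraFreeMonoid (R := ℂ) (X := X)).symm
    (MonoidAlgebra.ofCoeff (Finsupp.mapRange (starRingEnd ℂ) (map_zero _)
      (FreeAlgebra.equivMonoidAlgebraFreeMonoid (R := ℂ) (X := X) p).coeff))

/-- The star operation of the free complex *-algebra with self-adjoint generators:
reverse words (the `star` of `FreeAlgebra`) and conjugate the coefficients. -/
def fstar {X : Type} (p : FAlg X) : FAlg X := star (conjCoeff p)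

/-- Self-adjointness in the free complex *-algebra. -/
def IsSA {X : Type} (p : FAlg X) : Prop := fstar p = p

/-- A Hermitian unital linear functional. -/
def IsHermState {X : Type} (τ : FAlg X →ₗ[ℂ] ℂ) : Prop :=
  τ 1 = 1 ∧ ∀ p, τ (fstar p) = starRingEnd ℂ (τ p)

/-- Ordered product of a word of matrices. -/
def wordMat {N : ℕ} {κ : Type} (A : κ → Mat N) (w : List κ) : Mat N := (w.map A).prod

/-- Ordered product of a word of generators in the free algebra. -/
def wordAlg {κ : Type} (w : List κ) : FAlg κ := (w.map (FreeAlgebra.ι ℂ)).prod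

/-- The microstate set `Γ_R(τ; N, m, δ)` of a functional on the free algebra on `κ`:
tuples of self-adjoint matrices of operator norm at most `R` whose normalized trace of
every word of length `1 ≤ l ≤ m` is `δ`-close to the corresponding moment of `τ`. -/
def microSet {κ : Type} (R : ℝ) (τ : FAlg κ →ₗ[ℂ] ℂ) (N m : ℕ) (δ : ℝ) :
    Set (κ → Mat N) :=
  {A | (∀ j, (A j).IsHermitian ∧ opNorm (A j) ≤ R) ∧
    ∀ w : List κ, w ≠ [] → w.length ≤ m →
      ‖trN N (wordMat A w) - τ (wordAlg w)‖ < δ}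

/-- `τ` has finite-dimensional approximants. -/
def HasFDA {κ : Type} (R : ℝ) (τ : FAlg κ →ₗ[ℂ] ℂ) : Prop :=
  ∀ (m : ℕ) (δ : ℝ), 0 < δ → ∃ N, (microSet R τ N m δ).Nonempty

variable {ι : Type} [Fintype ι]

/-- The index of the generators `x_{ij}`, `i ∈ ι`, `1 ≤ j ≤ r i`. -/
abbrev gen (r : ι → ℕ) := Σ i : ι, Fin (r i)

/-- Evaluation of the full free algebra at a family of matrix tuples. -/
def evalA {r : ι → ℕ} {N : ℕ} (A : ∀ i, Fin (r i) → Mat N) :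
    FAlg (gen r) →ₐ[ℂ] Mat N :=
  FreeAlgebra.lift ℂ fun p : gen r => A p.1 p.2

/-- The canonical embedding `ℂ⟨x_i⟩ → ℂ⟨x⟩`. -/
def inclAlg (r : ι → ℕ) (i : ι) : FAlg (Fin (r i)) →ₐ[ℂ] FAlg (gen r) :=
  FreeAlgebra.lift ℂ fun j => FreeAlgebra.ι ℂ (⟨i, j⟩ : gen r)

/-- The restriction of a functional on `ℂ⟨x⟩` to `ℂ⟨x_i⟩`. -/
def restr {r : ι → ℕ} (τ : FAlg (gen r) →ₗ[ℂ] ℂ) (i : ι) :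
    FAlg (Fin (r i)) →ₗ[ℂ] ℂ :=
  τ ∘ₗ (inclAlg r i).toLinearMap

/-- The embedding of the free algebra of a sub-system of the variables. -/
def inclSub {r : ι → ℕ} (P : ι → Prop) :
    FAlg (gen fun i : Subtype P => r i.1) →ₐ[ℂ] FAlg (gen r) :=
  FreeAlgebra.lift ℂ fun p => FreeAlgebra.ι ℂ (⟨p.1.1, p.2⟩ : gen r)

/-- Restriction of a functional to a sub-system of the variables. -/
def restrSub {r : ι → ℕ} (P : ι → Prop) (τ : FAlg (gen r) →ₗ[ℂ] ℂ) :
    FAlg (gen fun i : Subtype P => r i.1) →ₗ[ℂ] ℂ :=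
  τ ∘ₗ (inclSub P).toLinearMap

/-- The conjugated family `(V_i A_i V_i^*)_i`. -/
def conjFam {r : ι → ℕ} {N : ℕ} (V : ι → UN N) (A : ∀ i, Fin (r i) → Mat N) :
    ∀ i, Fin (r i) → Mat N :=
  fun i j => (V i : Mat N) * A i j * star (V i : Mat N)

/-- The Gibbs weight `exp(-N² tr_N(h((V_i A_i V_i^*)_i)))`. -/
def gibbsWt {r : ι → ℕ} {N : ℕ} (h : FAlg (gen r)) (A : ∀ i, Fin (r i) → Mat N)
    (V : ι → UN N) : ℝ :=
  Real.exp (-(N : ℝ) ^ 2 * (trN N (evalA (conjFam V A) h)).re)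

/-- The product `∏_i Γ_R(τ_i; N, m, δ)` of the microstate sets. -/
def microProd (R : ℝ) {r : ι → ℕ} (τs : ∀ i, FAlg (Fin (r i)) →ₗ[ℂ] ℂ)
    (N m : ℕ) (δ : ℝ) : Set (∀ i, Fin (r i) → Mat N) :=
  {A | ∀ i, A i ∈ microSet R (τs i) N m δ}

/-- The finite-`N` orbital free pressure `π_{orb,R}(h : (τ_i); N, m, δ)`
(`-∞` when some microstate set is empty). -/
def piOrbN (γ : ∀ N, Measure (UN N)) (R : ℝ) {r : ι → ℕ} (h : FAlg (gen r))
    (τs : ∀ i, FAlg (Fin (r i)) →ₗ[ℂ] ℂ) (N m : ℕ) (δ : ℝ) : EReal :=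
  ⨆ A ∈ microProd R τs N m δ,
    ((Real.log (∫ V : ι → UN N, gibbsWt h A V ∂(Measure.pi fun _ => γ N)) : ℝ) : EReal)

/-- The orbital free pressure `π_{orb,R}(h : (τ_i))`. -/
def piOrb (γ : ∀ N, Measure (UN N)) (R : ℝ) {r : ι → ℕ} (h : FAlg (gen r))
    (τs : ∀ i, FAlg (Fin (r i)) →ₗ[ℂ] ℂ) : EReal :=
  ⨅ (m : ℕ) (δ : ℝ) (_ : 0 < δ),
    Filter.limsup
      (fun N : ℕ => ((((N : ℝ) ^ 2)⁻¹ : ℝ) : EReal) * piOrbN γ R h τs N m δ)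
      Filter.atTop

/-- The "universal" `R`-norm `‖h‖_R`: the supremum of the operator norms of all
evaluations of `h` at families of self-adjoint matrices of norm at most `R`. -/
def normR (R : ℝ) {r : ι → ℕ} (h : FAlg (gen r)) : ℝ :=
  sSup {t : ℝ | ∃ (N : ℕ) (A : ∀ i, Fin (r i) → Mat N),
    (∀ i j, (A i j).IsHermitian ∧ opNorm (A i j) ≤ R) ∧ t = opNorm (evalA A h)}

/-- The minus Legendre transform `inf_h (φ(h) + π_{orb,R}(h : (τ_i)))` of the orbital
free pressure, relative to `(τ_i)`. -/
def etaOrbRel (γ : ∀ N, Measure (UN N)) (R : ℝ) {r : ι → ℕ}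
    (τ : FAlg (gen r) →ₗ[ℂ] ℂ) (τs : ∀ i, FAlg (Fin (r i)) →ₗ[ℂ] ℂ) : EReal :=
  ⨅ (h : FAlg (gen r)) (_ : IsSA h),
    (((τ h).re : ℝ) : EReal) + piOrb γ R h τs

/-- The orbital `η`-entropy `η_{orb,R}(τ)`. -/
def etaOrb (γ : ∀ N, Measure (UN N)) (R : ℝ) {r : ι → ℕ}
    (τ : FAlg (gen r) →ₗ[ℂ] ℂ) : EReal :=
  etaOrbRel γ R τ (restr τ)

/-- The microstate set `Γ_R(τ; N, m, δ)` of a functional on the full free algebra. -/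
def microFull (R : ℝ) {r : ι → ℕ} (τ : FAlg (gen r) →ₗ[ℂ] ℂ) (N m : ℕ) (δ : ℝ) :
    Set (∀ i, Fin (r i) → Mat N) :=
  {A | (∀ i j, (A i j).IsHermitian ∧ opNorm (A i j) ≤ R) ∧
    ∀ w : List (gen r), w ≠ [] → w.length ≤ m →
      ‖trN N (wordMat (fun p : gen r => A p.1 p.2) w) - τ (wordAlg w)‖ < δ}

/-- `τ` (on the full algebra) has finite-dimensional approximants. -/
def HasFDAFull (R : ℝ) {r : ι → ℕ} (τ : FAlg (gen r) →ₗ[ℂ] ℂ) : Prop :=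
  ∀ (m : ℕ) (δ : ℝ), 0 < δ → ∃ N, (microFull R τ N m δ).Nonempty

/-- The orbital microstate set `Γ_orb(τ : (A_i); N, m, δ)`. -/
def orbSet (R : ℝ) {r : ι → ℕ} (τ : FAlg (gen r) →ₗ[ℂ] ℂ) {N : ℕ}
    (A : ∀ i, Fin (r i) → Mat N) (m : ℕ) (δ : ℝ) : Set (ι → UN N) :=
  {V | conjFam V A ∈ microFull R τ N m δ}

/-- The orbital free entropy `χ_{orb,R}(τ)`. -/
def chiOrb (γ : ∀ N, Measure (UN N)) (R : ℝ) {r : ι → ℕ}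
    (τ : FAlg (gen r) →ₗ[ℂ] ℂ) : EReal :=
  ⨅ (m : ℕ) (δ : ℝ) (_ : 0 < δ),
    Filter.limsup
      (fun N : ℕ => ((((N : ℝ) ^ 2)⁻¹ : ℝ) : EReal) *
        ⨆ A ∈ microProd R (restr τ) N m δ,
          ENNReal.log ((Measure.pi fun _ : ι => γ N) (orbSet R τ A m δ)))
      Filter.atTop

/-- A tracial `R₀`-state on `ℂ⟨x⟩`. -/
def IsTracialRState {r : ι → ℕ} (R₀ : ℝ) (τ : FAlg (gen r) →ₗ[ℂ] ℂ) : Prop :=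
  IsHermState τ ∧ (∀ p q, τ (p * q) = τ (q * p)) ∧
  (∀ p, 0 ≤ (τ (fstar p * p)).re) ∧
  ∀ (i : ι) (j : Fin (r i)) (k : ℕ) (p : FAlg (gen r)),
    (τ (fstar p * FreeAlgebra.ι ℂ (⟨i, j⟩ : gen r) ^ (2 * k) * p)).re
      ≤ R₀ ^ (2 * k) * (τ (fstar p * p)).re

/-- `τ` is the free product of its restrictions `τ_i`: alternating words in the
`τ`-centered subalgebras `ℂ⟨x_i⟩` have vanishing `τ`-value. -/
def IsFreeProduct {r : ι → ℕ} (τ : FAlg (gen r) →ₗ[ℂ] ℂ) : Prop :=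
  ∀ (k : ℕ), 0 < k → ∀ (idx : Fin k → ι) (p : ∀ l, FAlg (Fin (r (idx l)))),
    (∀ l, τ (inclAlg r (idx l) (p l)) = 0) →
    (∀ (l : Fin k) (hl : (l : ℕ) + 1 < k), idx l ≠ idx ⟨(l : ℕ) + 1, hl⟩) →
    τ ((List.ofFn fun l => inclAlg r (idx l) (p l)).prod) = 0

/-- The partition function `Z_N^{(h, Ξ(N))}` of the orbital Gibbs micro-ensemble. -/
def ZOrbN (γ : ∀ N, Measure (UN N)) {r : ι → ℕ} (h : FAlg (gen r)) {N : ℕ}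
    (A : ∀ i, Fin (r i) → Mat N) : ℝ :=
  ∫ V : ι → UN N, gibbsWt h A V ∂(Measure.pi fun _ => γ N)

/-- The orbital Gibbs micro-ensemble `μ_N^{(h, Ξ(N))}`. -/
def muOrbN (γ : ∀ N, Measure (UN N)) {r : ι → ℕ} (h : FAlg (gen r)) {N : ℕ}
    (A : ∀ i, Fin (r i) → Mat N) : Measure (ι → UN N) :=
  (Measure.pi fun _ => γ N).withDensity
    fun V => ENNReal.ofReal (gibbsWt h A V / ZOrbN γ h A)

/-! ### Lebesgue measure on self-adjoint matrices and one-variable quantities -/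

/-- The parametrization of self-adjoint matrices by the diagonal entries and the real
and imaginary parts of the above-diagonal entries. -/
def matOfCoord (N : ℕ) (f : Fin N × Fin N → ℝ) : Mat N :=
  Matrix.of fun p q =>
    if p = q then (f (p, p) : ℂ)
    else if p < q then (f (p, q) : ℂ) + (f (q, p) : ℂ) * Complex.I
    else (f (q, p) : ℂ) - (f (p, q) : ℂ) * Complex.I

/-- The Lebesgue measure `Λ_N` on self-adjoint `N × N` matrices. -/
def LambdaMat (N : ℕ) : Measure (Mat N) :=
  Measure.map (matOfCoord N) (volume : Measure (Fin N × Fin N → ℝ))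

/-- The product Lebesgue measure `Λ_N^{⊗n}` on `n`-tuples of self-adjoint matrices. -/
def LambdaPow (n N : ℕ) : Measure (Fin n → Mat N) :=
  Measure.map (fun f i => matOfCoord N (f i))
    (volume : Measure (Fin n → Fin N × Fin N → ℝ))

/-- Evaluation of a polynomial in `n` single variables at an `n`-tuple of matrices. -/
def evalSingle {n : ℕ} {N : ℕ} (A : Fin n → Mat N) :
    FAlg (gen fun _ : Fin n => 1) →ₐ[ℂ] Mat N :=
  evalA fun i (_ : Fin 1) => A i

/-- The set `((M_N(ℂ)^{sa})_R)^n`. -/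
def ballR (n N : ℕ) (R : ℝ) : Set (Fin n → Mat N) :=
  {A | ∀ i, (A i).IsHermitian ∧ opNorm (A i) ≤ R}

/-- The partition function `Z_{R,N}^h`. -/
def ZR (n N : ℕ) (R : ℝ) (h : FAlg (gen fun _ : Fin n => 1)) : ℝ :=
  ∫ A in ballR n N R,
    Real.exp (-(N : ℝ) ^ 2 * (trN N (evalSingle A h)).re) ∂(LambdaPow n N)

/-- The free pressure `π_R(h)`. -/
def piR (n : ℕ) (R : ℝ) (h : FAlg (gen fun _ : Fin n => 1)) : EReal :=
  Filter.limsup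
    (fun N : ℕ => ((((N : ℝ) ^ 2)⁻¹ : ℝ) : EReal) * ((Real.log (ZR n N R h) : ℝ) : EReal)
      + ((((n : ℝ) / 2 * Real.log N) : ℝ) : EReal))
    Filter.atTop

/-- The Gibbs micro-ensemble `λ_{R,N}^h`. -/
def lambdaGibbs (n N : ℕ) (R : ℝ) (h : FAlg (gen fun _ : Fin n => 1)) :
    Measure (Fin n → Mat N) :=
  ((LambdaPow n N).restrict (ballR n N R)).withDensity
    fun A => ENNReal.ofReal
      (Real.exp (-(N : ℝ) ^ 2 * (trN N (evalSingle A h)).re) / ZR n N R h)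

/-- The microstate free entropy `χ_R` of a single-variable functional. -/
def chiR1 (R : ℝ) (τ : FAlg (Fin 1) →ₗ[ℂ] ℂ) : EReal :=
  ⨅ (m : ℕ) (δ : ℝ) (_ : 0 < δ),
    Filter.limsup
      (fun N : ℕ => ((((N : ℝ) ^ 2)⁻¹ : ℝ) : EReal) *
          ENNReal.log (LambdaMat N {B : Mat N | (fun _ : Fin 1 => B) ∈ microSet R τ N m δ})
        + ((((1 : ℝ) / 2 * Real.log N) : ℝ) : EReal))
      Filter.atTop

/-- The microstate free entropy `χ_R` of a functional on `n` single variables. -/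
def chiRn (n : ℕ) (R : ℝ) (σ : FAlg (gen fun _ : Fin n => 1) →ₗ[ℂ] ℂ) : EReal :=
  ⨅ (m : ℕ) (δ : ℝ) (_ : 0 < δ),
    Filter.limsup
      (fun N : ℕ => ((((N : ℝ) ^ 2)⁻¹ : ℝ) : EReal) *
          ENNReal.log (LambdaPow n N
            {A : Fin n → Mat N | (fun i (_ : Fin 1) => A i) ∈ microFull R σ N m δ})
        + ((((n : ℝ) / 2 * Real.log N) : ℝ) : EReal))
      Filter.atTop

/-- The `η`-entropy `η_R(τ)`, the minus Legendre transform of the free pressure. -/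
def etaR (n : ℕ) (R : ℝ) (τ : FAlg (gen fun _ : Fin n => 1) →ₗ[ℂ] ℂ) : EReal :=
  ⨅ (h : FAlg (gen fun _ : Fin n => 1)) (_ : IsSA h),
    (((τ h).re : ℝ) : EReal) + piR n R h

/-! ### The doubled (tensor) orbital free pressure -/

/-- The algebraic tensor product `ℂ⟨x⟩ ⊗ ℂ⟨x⟩`. -/
abbrev TAlg (r : ι → ℕ) := TensorProduct ℂ (FAlg (gen r)) (FAlg (gen r))

/-- The functional `τ ⊗ τ` on `ℂ⟨x⟩ ⊗ ℂ⟨x⟩`. -/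
def tensFun {r : ι → ℕ} (τ : FAlg (gen r) →ₗ[ℂ] ℂ) : TAlg r →ₗ[ℂ] ℂ :=
  (TensorProduct.lid ℂ ℂ).toLinearMap ∘ₗ TensorProduct.map τ τ

/-- The normalized trace as a linear map. -/
def trLin (N : ℕ) : Mat N →ₗ[ℂ] ℂ := (N : ℂ)⁻¹ • Matrix.traceLinearMap (Fin N) ℂ ℂ

/-- The functional `tr_N ⊗ tr_N` on `M_N(ℂ) ⊗ M_N(ℂ)`. -/
def tr2 (N : ℕ) : TensorProduct ℂ (Mat N) (Mat N) →ₗ[ℂ] ℂ :=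
  (TensorProduct.lid ℂ ℂ).toLinearMap ∘ₗ TensorProduct.map (trLin N) (trLin N)

/-- Evaluation of `ℂ⟨x⟩ ⊗ ℂ⟨x⟩` at a family of matrix tuples. -/
def evalT {r : ι → ℕ} {N : ℕ} (A : ∀ i, Fin (r i) → Mat N) :
    TAlg r →ₐ[ℂ] TensorProduct ℂ (Mat N) (Mat N) :=
  Algebra.TensorProduct.map (evalA A) (evalA A)

/-- The finite-`N` doubled orbital free pressure `π^{(2)}_{orb,R}(p : (τ_i); N, m, δ)`. -/
def pi2OrbN (γ : ∀ N, Measure (UN N)) (R : ℝ) {r : ι → ℕ} (p : TAlg r)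
    (τs : ∀ i, FAlg (Fin (r i)) →ₗ[ℂ] ℂ) (N m : ℕ) (δ : ℝ) : EReal :=
  ⨆ A ∈ microProd R τs N m δ,
    ((Real.log (∫ V : ι → UN N,
        Real.exp (-(N : ℝ) ^ 2 * (tr2 N (evalT (conjFam V A) p)).re)
        ∂(Measure.pi fun _ => γ N)) : ℝ) : EReal)

/-- The doubled orbital free pressure `π^{(2)}_{orb,R}(p : (τ_i))`. -/
def pi2Orb (γ : ∀ N, Measure (UN N)) (R : ℝ) {r : ι → ℕ} (p : TAlg r)
    (τs : ∀ i, FAlg (Fin (r i)) →ₗ[ℂ] ℂ) : EReal :=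
  ⨅ (m : ℕ) (δ : ℝ) (_ : 0 < δ),
    Filter.limsup
      (fun N : ℕ => ((((N : ℝ) ^ 2)⁻¹ : ℝ) : EReal) * pi2OrbN γ R p τs N m δ)
      Filter.atTop

/-!
With a single multi-variable the unitary integral in the orbital free pressure is trivial:
conjugating the whole tuple by one unitary `V` does not change `tr_N(h(A))`, so the integrand
is the constant `exp(-N² tr_N(h(A)))` and the normalized pressure at dimension `N` is the supremum
of `-tr_N(h(A))` over microstates. Since words span `ℂ⟨x⟩`, `tr_N(h(A))` is within `O(δ)` of
`τ(h)` on microstates of high enough order. With finite-dimensional approximants, ampliation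
`A ↦ A ⊕ ⋯ ⊕ A` provides microstates in infinitely many dimensions, so the limsup is `-τ(h)`
and `η_orb(τ) = 0`. Without them some microstate set is empty in every dimension, so the pressure
of every `h` is `-∞`, and so is `η_orb(τ)`.
-/

section FreeAlgebraWords

variable {κ : Type}

lemma wordAlg_append (u v : List κ) : wordAlg (u ++ v) = wordAlg u * wordAlg v := by
  simp [wordAlg]

lemma lift_wordAlg {N : ℕ} (A : κ → Mat N) (w : List κ) :
    FreeAlgebra.lift ℂ A (wordAlg w) = wordMat A w := by
  simp [wordAlg, wordMat, map_list_prod, Function.comp_def]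

open scoped Pointwise in
lemma span_range_wordAlg : Submodule.span ℂ (Set.range (wordAlg (κ := κ))) = ⊤ := by
  have hmul : Set.range (wordAlg (κ := κ)) * Set.range (wordAlg (κ := κ)) ⊆
      Set.range (wordAlg (κ := κ)) := by
    rintro _ ⟨_, ⟨u, rfl⟩, _, ⟨v, rfl⟩, rfl⟩
    exact ⟨u ++ v, wordAlg_append u v⟩
  refine Submodule.eq_top_iff'.2 fun h => ?_
  induction h using FreeAlgebra.induction with
  | grade0 c =>
    rw [Algebra.algebraMap_eq_smul_one]
    exact Submodule.smul_mem _ c (Submodule.subset_span ⟨[], rfl⟩)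
  | grade1 x => exact Submodule.subset_span ⟨[x], by simp [wordAlg]⟩
  | mul a b ha hb =>
    exact Submodule.span_mono hmul
      (Submodule.span_mul_span ℂ (A := FAlg κ) _ _ ▸ Submodule.mul_mem_mul ha hb)
  | add a b ha hb => exact add_mem ha hb

lemma isSA_zero : IsSA (0 : FAlg κ) := by
  simp [IsSA, fstar, conjCoeff]

end FreeAlgebraWords

lemma trN_eq_trLin {N : ℕ} (A : Mat N) : trN N A = trLin N A := by
  simp [trN, trLin, div_eq_inv_mul]

lemma trN_one {N : ℕ} (hN : N ≠ 0) : trN N (1 : Mat N) = 1 := by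
  simp [trN, hN]

def ampliation (N k : ℕ) : Mat N →⋆ₐ[ℂ] Mat (N * k) where
  toAlgHom := ((Matrix.reindexAlgEquiv ℂ ℂ finProdFinEquiv).toAlgHom.comp
    (AlgHom.mk' (Matrix.blockDiagonalRingHom (Fin N) (Fin k) ℂ)
      (fun c x => Matrix.blockDiagonal_smul c x))).comp
    (Pi.constAlgHom ℂ (Fin k) (Mat N))
  map_star' B := by
    change Matrix.reindex _ _ (Matrix.blockDiagonal fun _ : Fin k => star B) =
      star (Matrix.reindex _ _ (Matrix.blockDiagonal fun _ : Fin k => B))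
    simp [Matrix.star_eq_conjTranspose, Matrix.conjTranspose_submatrix,
      Matrix.blockDiagonal_conjTranspose]

lemma trN_ampliation {N k : ℕ} (hk : k ≠ 0) (B : Mat N) :
    trN (N * k) (ampliation N k B) = trN N B := by
  rcases eq_or_ne N 0 with rfl | hN
  · simp [trN]
  have htrace : (ampliation N k B).trace = k * B.trace :=
    calc (ampliation N k B).trace = (Matrix.blockDiagonal fun _ : Fin k => B).trace :=
          Fintype.sum_equiv finProdFinEquiv.symm _ _ fun _ => rfl
      _ = k * B.trace := by simp [Matrix.trace_blockDiagonal]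
  simp only [trN, htrace, Nat.cast_mul]
  field_simp

lemma opNorm_ampliation_le (N k : ℕ) (B : Mat N) : opNorm (ampliation N k B) ≤ opNorm B := by
  let e₁ := Matrix.toEuclideanCLM (n := Fin N) (𝕜 := ℂ)
  let e₂ := Matrix.toEuclideanCLM (n := Fin (N * k)) (𝕜 := ℂ)
  let Ψ := e₂.toStarAlgHom.comp ((ampliation N k).comp e₁.symm.toStarAlgHom)
  simpa [Ψ, opNorm, e₁, e₂] using NonUnitalStarAlgHom.norm_apply_le Ψ (e₁ B)

section Microstates

variable {κ : Type} {R : ℝ} {τ : FAlg κ →ₗ[ℂ] ℂ}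

lemma microSet_anti {N m m' : ℕ} {δ δ' : ℝ} (hm : m ≤ m') (hδ : δ' ≤ δ) :
    microSet R τ N m' δ' ⊆ microSet R τ N m δ :=
  fun _ ⟨hA, hw⟩ => ⟨hA, fun w hne hlen => (hw w hne (hlen.trans hm)).trans_le hδ⟩

lemma comp_mem_microSet_iff {κ' : Type} (e : κ' ≃ κ) {N m : ℕ} {δ : ℝ} {B : κ → Mat N} :
    B ∘ e ∈ microSet R (τ ∘ₗ (FreeAlgebra.lift ℂ (FreeAlgebra.ι ℂ ∘ e)).toLinearMap) N m δ ↔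
      B ∈ microSet R τ N m δ := by
  have hmat (w : List κ') : wordMat (B ∘ e) w = wordMat B (w.map e) := by
    simp [wordMat]
  have halg (w : List κ') :
      FreeAlgebra.lift ℂ (FreeAlgebra.ι ℂ ∘ e) (wordAlg w) = wordAlg (w.map e) := by
    simp [wordAlg, map_list_prod, Function.comp_def]
  simp only [microSet, Set.mem_ofPred_eq, Function.comp_apply, LinearMap.comp_apply,
    AlgHom.toLinearMap_apply, hmat, halg]
  refine and_congr (e.forall_congr_right (q := fun j => (B j).IsHermitian ∧ opNorm (B j) ≤ R))
    ((Equiv.listEquivOfEquiv e).forall_congr fun w => ?_)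
  simp [Equiv.listEquivOfEquiv]

theorem exists_norm_trN_lift_sub_le (hτ : τ 1 = 1) (h : FAlg κ) :
    ∃ (C : ℝ) (m : ℕ), ∀ {N : ℕ} {δ : ℝ} {A : κ → Mat N}, N ≠ 0 →
      A ∈ microSet R τ N m δ → ‖trN N (FreeAlgebra.lift ℂ A h) - τ h‖ ≤ C * δ := by
  have hh : h ∈ Submodule.span ℂ (Set.range (wordAlg (κ := κ))) := by
    rw [span_range_wordAlg]; trivial
  induction hh using Submodule.span_induction with
  | mem _ hw =>
    obtain ⟨w, rfl⟩ := hw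
    rcases eq_or_ne w [] with rfl | hne
    · refine ⟨0, 0, fun hN _ => ?_⟩
      simp [wordAlg, trN_one hN, hτ]
    · exact ⟨1, w.length, fun _ hA => by
        rw [lift_wordAlg, one_mul]; exact (hA.2 w hne le_rfl).le⟩
  | zero => exact ⟨0, 0, fun _ _ => by simp [trN]⟩
  | add a b _ _ ha hb =>
    obtain ⟨C₁, m₁, h₁⟩ := ha
    obtain ⟨C₂, m₂, h₂⟩ := hb
    refine ⟨C₁ + C₂, max m₁ m₂, fun {N δ A} hN hA => ?_⟩
    have hA₁ := microSet_anti (le_max_left m₁ m₂) le_rfl hA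
    have hA₂ := microSet_anti (le_max_right m₁ m₂) le_rfl hA
    calc ‖trN N (FreeAlgebra.lift ℂ A (a + b)) - τ (a + b)‖
        = ‖(trN N (FreeAlgebra.lift ℂ A a) - τ a) + (trN N (FreeAlgebra.lift ℂ A b) - τ b)‖ := by
          simp only [map_add, trN_eq_trLin]; ring_nf
      _ ≤ C₁ * δ + C₂ * δ := (norm_add_le _ _).trans (add_le_add (h₁ hN hA₁) (h₂ hN hA₂))
      _ = (C₁ + C₂) * δ := by ring
  | smul c a _ ha =>
    obtain ⟨C, m, hC⟩ := ha
    refine ⟨‖c‖ * C, m, fun {N δ A} hN hA => ?_⟩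
    calc ‖trN N (FreeAlgebra.lift ℂ A (c • a)) - τ (c • a)‖
        = ‖c • (trN N (FreeAlgebra.lift ℂ A a) - τ a)‖ := by
          simp only [map_smul, trN_eq_trLin, smul_sub]
      _ ≤ ‖c‖ * (C * δ) := by rw [norm_smul]; gcongr; exact hC hN hA
      _ = ‖c‖ * C * δ := by ring

lemma ampliation_mem_microSet {N m k : ℕ} {δ : ℝ} (hk : k ≠ 0) {A : κ → Mat N}
    (hA : A ∈ microSet R τ N m δ) :
    (fun j => ampliation N k (A j)) ∈ microSet R τ (N * k) m δ := by
  refine ⟨fun j => ⟨?_, (opNorm_ampliation_le N k (A j)).trans (hA.1 j).2⟩,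
    fun w hne hlen => ?_⟩
  · rw [Matrix.IsHermitian, ← Matrix.star_eq_conjTranspose, ← map_star,
      Matrix.star_eq_conjTranspose, (hA.1 j).1]
  · have hword : wordMat (fun j => ampliation N k (A j)) w = ampliation N k (wordMat A w) := by
      simp [wordMat, map_list_prod, Function.comp_def]
    rw [hword, trN_ampliation hk]
    exact hA.2 w hne hlen

/-- A zero-dimensional microstate only says that all moments of `τ` are small (`tr_0 = 0`
by the junk value of division by zero), so zero matrices are microstates in every dimension. -/
lemma zero_mem_microSet_of_nonempty_microSet_zero {m : ℕ} {δ : ℝ}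
    (h₀ : (microSet R τ 0 m δ).Nonempty) (N : ℕ) :
    (fun _ => (0 : Mat N)) ∈ microSet R τ N m δ := by
  obtain ⟨A₀, hnorm, hword⟩ := h₀
  refine ⟨fun j => ⟨Matrix.isHermitian_zero, ?_⟩, fun w hne hlen => ?_⟩
  · simpa [opNorm] using (norm_nonneg _).trans (hnorm j).2
  · obtain ⟨a, w, rfl⟩ := List.exists_cons_of_ne_nil hne
    simpa [trN, wordMat] using hword (a :: w) hne hlen

lemma HasFDA.frequently_nonempty_microSet (hfda : HasFDA R τ) (m : ℕ) {δ : ℝ} (hδ : 0 < δ) :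
    ∃ᶠ N in atTop, (microSet R τ N m δ).Nonempty := by
  obtain ⟨N₀, A, hA⟩ := hfda m δ hδ
  refine Filter.frequently_atTop.2 fun M => ?_
  rcases eq_or_ne N₀ 0 with rfl | hN₀
  · exact ⟨M, le_rfl, _, zero_mem_microSet_of_nonempty_microSet_zero ⟨A, hA⟩ M⟩
  · refine ⟨N₀ * (M + 1), ?_, _, ampliation_mem_microSet M.succ_ne_zero hA⟩
    nlinarith [Nat.one_le_iff_ne_zero.2 hN₀]

end Microstates

section FullMicrostates

variable {r : ι → ℕ} {R : ℝ} {τ : FAlg (gen r) →ₗ[ℂ] ℂ} {N m : ℕ} {δ : ℝ}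

omit [Fintype ι] in
lemma mem_microFull_iff {A : ∀ i, Fin (r i) → Mat N} :
    A ∈ microFull R τ N m δ ↔ (fun p : gen r => A p.1 p.2) ∈ microSet R τ N m δ := by
  simp only [microFull, microSet, Set.mem_ofPred_eq, Sigma.forall]

omit [Fintype ι] in
lemma hasFDAFull_iff : HasFDAFull R τ ↔ HasFDA R τ :=
  forall₃_congr fun _ _ _ => exists_congr fun _ =>
    ⟨fun ⟨_, hA⟩ => ⟨_, mem_microFull_iff.1 hA⟩,
      fun ⟨A, hA⟩ => ⟨Sigma.curry A, mem_microFull_iff.2 hA⟩⟩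

omit [Fintype ι] in
lemma exists_forall_mem_microFull_abs_re_trN_sub_le (hτ : τ 1 = 1) (h : FAlg (gen r)) :
    ∃ m₀ : ℕ, ∀ ε > 0, ∃ δ₀ > 0, ∀ {N m : ℕ} {δ : ℝ} {A : ∀ i, Fin (r i) → Mat N},
      N ≠ 0 → m₀ ≤ m → δ ≤ δ₀ → A ∈ microFull R τ N m δ →
        |(trN N (evalA A h)).re - (τ h).re| ≤ ε := by
  obtain ⟨C, m₀, hC⟩ := exists_norm_trN_lift_sub_le (R := R) hτ h
  refine ⟨m₀, fun ε hε => ⟨ε / (|C| + 1), by positivity, fun hN hm hδ hA => ?_⟩⟩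
  have hA₀ := microSet_anti hm hδ (mem_microFull_iff.1 hA)
  calc |(trN _ (evalA _ h)).re - (τ h).re|
      ≤ ‖trN _ (evalA _ h) - τ h‖ := by rw [← Complex.sub_re]; exact Complex.abs_re_le_norm _
    _ ≤ C * (ε / (|C| + 1)) := hC hN hA₀
    _ ≤ |C| * (ε / (|C| + 1)) := by gcongr; exact le_abs_self C
    _ ≤ ε := by
      rw [mul_div_assoc']
      exact div_le_of_le_mul₀ (by positivity) hε.le (by nlinarith [abs_nonneg C])

end FullMicrostates

lemma iInf_limsup_eq_coe {F : ℕ → ℝ → ℕ → EReal} {t : ℝ}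
    (hle : ∀ ε > 0, ∃ m, ∃ δ > 0, ∀ᶠ N in atTop, F m δ N ≤ ((t + ε : ℝ) : EReal))
    (hge : ∀ m, ∀ δ > 0, ∀ ε > 0, ∃ᶠ N in atTop, ((t - ε : ℝ) : EReal) ≤ F m δ N) :
    ⨅ (m : ℕ) (δ : ℝ) (_ : 0 < δ), limsup (F m δ) atTop = t := by
  refine le_antisymm (EReal.le_of_forall_lt_iff_le.1 fun z hz => ?_)
    (le_iInf fun m => le_iInf₂ fun δ hδ => EReal.ge_of_forall_gt_iff_ge.1 fun z hz => ?_)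
  · obtain ⟨m, δ, hδ, hF⟩ := hle (z - t) (by simpa using EReal.coe_lt_coe_iff.1 hz)
    refine (iInf_le _ m).trans ((iInf₂_le δ hδ).trans (limsup_le_of_le (by isBoundedDefault) ?_))
    simpa using hF
  · have hF := hge m δ hδ (t - z) (by simpa using EReal.coe_lt_coe_iff.1 hz)
    exact le_limsup_of_frequently_le (by simpa using hF) (by isBoundedDefault)

lemma coe_inv_sq_mul_coe_neg_sq_mul {N : ℕ} (hN : N ≠ 0) (x : ℝ) :
    ((((N : ℝ) ^ 2)⁻¹ : ℝ) : EReal) * ((-(N : ℝ) ^ 2 * x : ℝ) : EReal) = ((-x : ℝ) : EReal) := by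
  rw [← EReal.coe_mul]
  congr 1
  field_simp

section OneMultivariable

variable [Unique ι] {r : ι → ℕ} {N : ℕ}

omit [Fintype ι] in
lemma evalA_conjFam (V : ι → UN N) (A : ∀ i, Fin (r i) → Mat N) :
    evalA (conjFam V A) =
      ((Unitary.conjStarAlgAut ℂ (Mat N) (V default)).toAlgEquiv : Mat N →ₐ[ℂ] Mat N).comp
        (evalA A) := by
  refine FreeAlgebra.hom_ext (funext fun ⟨i, j⟩ => ?_)
  obtain rfl := Unique.eq_default i
  simp [evalA, conjFam]

omit [Fintype ι] in
lemma trN_evalA_conjFam (V : ι → UN N) (A : ∀ i, Fin (r i) → Mat N) (h : FAlg (gen r)) :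
    trN N (evalA (conjFam V A) h) = trN N (evalA A h) := by
  rw [evalA_conjFam]
  simp [trN, Matrix.trace_mul_cycle (V default : Mat N)]

omit [Fintype ι] in
lemma microProd_restr_eq_microFull (R : ℝ) (τ : FAlg (gen r) →ₗ[ℂ] ℂ) (m : ℕ) (δ : ℝ) :
    microProd R (restr τ) N m δ = microFull R τ N m δ := by
  ext A
  rw [mem_microFull_iff, ← comp_mem_microSet_iff (Equiv.uniqueSigma fun i => Fin (r i)).symm]
  exact Unique.forall_iff

variable (γ : ∀ N, Measure (UN N)) [∀ N, IsProbabilityMeasure (γ N)]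
  {R : ℝ} {τ : FAlg (gen r) →ₗ[ℂ] ℂ} {m : ℕ} {δ : ℝ}

lemma integral_gibbsWt (h : FAlg (gen r)) (A : ∀ i, Fin (r i) → Mat N) :
    ∫ V, gibbsWt h A V ∂(Measure.pi fun _ => γ N) =
      Real.exp (-(N : ℝ) ^ 2 * (trN N (evalA A h)).re) := by
  simp [gibbsWt, trN_evalA_conjFam]

lemma piOrbN_restr_eq {h : FAlg (gen r)} :
    piOrbN γ R h (restr τ) N m δ =
      ⨆ A ∈ microFull R τ N m δ, ((-(N : ℝ) ^ 2 * (trN N (evalA A h)).re : ℝ) : EReal) := by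
  simp only [piOrbN, microProd_restr_eq_microFull, integral_gibbsWt, Real.log_exp]

lemma inv_sq_mul_piOrbN_restr_le {h : FAlg (gen r)} (hN : N ≠ 0) {b : ℝ}
    (hb : ∀ A ∈ microFull R τ N m δ, -(trN N (evalA A h)).re ≤ b) :
    ((((N : ℝ) ^ 2)⁻¹ : ℝ) : EReal) * piOrbN γ R h (restr τ) N m δ ≤ b := by
  have hb' : piOrbN γ R h (restr τ) N m δ ≤ (((N : ℝ) ^ 2 * b : ℝ) : EReal) := by
    rw [piOrbN_restr_eq]
    refine iSup₂_le fun A hA => EReal.coe_le_coe_iff.2 ?_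
    nlinarith [hb A hA, sq_nonneg (N : ℝ)]
  calc _ ≤ ((((N : ℝ) ^ 2)⁻¹ : ℝ) : EReal) * (((N : ℝ) ^ 2 * b : ℝ) : EReal) :=
        mul_le_mul_of_nonneg_left hb' (EReal.coe_nonneg.2 (by positivity))
    _ = b := by rw [← EReal.coe_mul, inv_mul_cancel_left₀ (by positivity)]

lemma le_inv_sq_mul_piOrbN_restr {h : FAlg (gen r)} (hN : N ≠ 0) {A : ∀ i, Fin (r i) → Mat N}
    (hA : A ∈ microFull R τ N m δ) :
    ((-(trN N (evalA A h)).re : ℝ) : EReal) ≤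
      ((((N : ℝ) ^ 2)⁻¹ : ℝ) : EReal) * piOrbN γ R h (restr τ) N m δ := by
  rw [← coe_inv_sq_mul_coe_neg_sq_mul hN]
  refine mul_le_mul_of_nonneg_left ?_ (EReal.coe_nonneg.2 (by positivity))
  rw [piOrbN_restr_eq]
  exact le_iSup₂ (f := fun A (_ : A ∈ microFull R τ N m δ) =>
    ((-(N : ℝ) ^ 2 * (trN N (evalA A h)).re : ℝ) : EReal)) A hA

theorem piOrb_restr_eq_neg (hτ : τ 1 = 1) (hfda : HasFDAFull R τ) (h : FAlg (gen r)) :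
    piOrb γ R h (restr τ) = ((-(τ h).re : ℝ) : EReal) := by
  obtain ⟨m₀, hm₀⟩ := exists_forall_mem_microFull_abs_re_trN_sub_le (R := R) hτ h
  refine iInf_limsup_eq_coe (fun ε hε => ?_) (fun m δ hδ ε hε => ?_)
  · obtain ⟨δ₀, hδ₀, hclose⟩ := hm₀ ε hε
    refine ⟨m₀, δ₀, hδ₀, (eventually_ne_atTop 0).mono fun N hN =>
      inv_sq_mul_piOrbN_restr_le γ hN fun A hA => ?_⟩
    linarith [abs_le.1 (hclose hN le_rfl le_rfl hA)]
  · obtain ⟨δ₀, hδ₀, hclose⟩ := hm₀ ε hε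
    have hfreq :=
      (hasFDAFull_iff.1 hfda).frequently_nonempty_microSet (max m m₀) (lt_min hδ hδ₀)
    refine (hfreq.and_eventually (eventually_ne_atTop 0)).mono fun N ⟨⟨A, hA⟩, hN⟩ => ?_
    have hA' : Sigma.curry A ∈ microFull R τ N m δ :=
      mem_microFull_iff.2 (microSet_anti (le_max_left _ _) (min_le_left _ _) hA)
    have hA₀ : Sigma.curry A ∈ microFull R τ N (max m m₀) (min δ δ₀) := mem_microFull_iff.2 hA
    refine le_trans (EReal.coe_le_coe_iff.2 ?_) (le_inv_sq_mul_piOrbN_restr γ hN hA')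
    linarith [abs_le.1 (hclose hN (le_max_right _ _) (min_le_right _ _) hA₀)]

theorem piOrb_restr_eq_bot (hfda : ¬ HasFDAFull R τ) (h : FAlg (gen r)) :
    piOrb γ R h (restr τ) = ⊥ := by
  simp only [HasFDAFull, not_forall, not_exists, Set.not_nonempty_iff_eq_empty] at hfda
  obtain ⟨m, δ, hδ, hempty⟩ := hfda
  refine le_bot_iff.1 ((iInf_le _ m).trans ((iInf₂_le δ hδ).trans
    (limsup_le_of_le (by isBoundedDefault) ((eventually_ne_atTop 0).mono fun N hN => ?_))))
  rw [piOrbN_restr_eq, hempty N]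
  simp [EReal.coe_mul_bot_of_pos (by positivity : (0 : ℝ) < ((N : ℝ) ^ 2)⁻¹)]

theorem etaOrb_eq_zero (hτ : τ 1 = 1) (hfda : HasFDAFull R τ) : etaOrb γ R τ = 0 := by
  have hzero (h : FAlg (gen r)) : (((τ h).re : ℝ) : EReal) + piOrb γ R h (restr τ) = 0 := by
    rw [piOrb_restr_eq_neg γ hτ hfda, ← EReal.coe_add, add_neg_cancel, EReal.coe_zero]
  exact le_antisymm ((iInf₂_le 0 isSA_zero).trans_eq (hzero 0))
    (le_iInf₂ fun h _ => (hzero h).ge)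

theorem etaOrb_eq_bot (hfda : ¬ HasFDAFull R τ) : etaOrb γ R τ = ⊥ :=
  le_bot_iff.1 ((iInf₂_le 0 isSA_zero).trans_eq
    (by rw [piOrb_restr_eq_bot γ hfda, EReal.add_bot]))

end OneMultivariable

theorem statement11_general (r : Fin 1 → ℕ) (R : ℝ)
    (γ : ∀ N, Measure (UN N)) [∀ N, IsProbabilityMeasure (γ N)]
    (τ : FAlg (gen r) →ₗ[ℂ] ℂ) (hτ : IsHermState τ) :
    (HasFDAFull R τ →
      (∀ h : FAlg (gen r), IsSA h →
        piOrb γ R h (restr τ) = (((-(τ h).re : ℝ)) : EReal)) ∧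
      etaOrb γ R τ = 0) ∧
    (¬ HasFDAFull R τ → etaOrb γ R τ = ⊥) :=
  ⟨fun hfda => ⟨fun h _ => piOrb_restr_eq_neg γ hτ.1 hfda h, etaOrb_eq_zero γ hτ.1 hfda⟩,
    etaOrb_eq_bot γ⟩

/-- Theorem 3.5 (7), `n = 1`: for one multi-variable,
`π_{orb,R}(h : τ) = -τ(h)` and `η_{orb,R}(τ) = 0` when `τ` has finite-dimensional
approximants, and `η_{orb,R}(τ) = -∞` otherwise. -/
theorem statement11 (r : Fin 1 → ℕ) (hr : ∀ i, 1 ≤ r i) (R : ℝ) (hR : 0 < R)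
    (γ : ∀ N, Measure (UN N)) [∀ N, IsProbabilityMeasure (γ N)]
    (hγ : ∀ N, (γ N).IsMulLeftInvariant)
    (τ : FAlg (gen r) →ₗ[ℂ] ℂ) (hτ : IsHermState τ) :
    (HasFDAFull R τ →
      (∀ h : FAlg (gen r), IsSA h →
        piOrb γ R h (restr τ) = (((-(τ h).re : ℝ)) : EReal)) ∧
      etaOrb γ R τ = 0) ∧
    (¬ HasFDAFull R τ → etaOrb γ R τ = ⊥) :=
  statement11_general r R γ τ hτ

end OrbFP

end
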